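/- arXiv:1810.07362 — 6 statements merged into one kernel-verified Lean document; each statement's English description precedes it below -/
import Mathlib

section
/- Let W ⊆ ℝ be nonempty, let L : W → ℝ and ℓ : W → ℝ with ℓ being G-Lipschitz (G > 0). Fix σ ∈ ℝ and set σ' = σ + 2G. If w_t minimizes w ↦ L(w) − σ' w over W and w_{t+1} minimizes w ↦ L(w) + ℓ(w) − σ w over W, then w_t ≥ w_{t+1}. -/
/-! Adding the two minimality conditions shows that the perturbation `ℓ w + 2G w`, which separates
the two objectives, is no larger at `w_{t+1}` than at `w_t`. Since `ℓ` is `G`-Lipschitz, this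
perturbation is strictly increasing on `W`, so `w_{t+1} ≤ w_t`. -/

theorem IsMinOn.le_of_isMinOn_add {α β : Type*} [AddCommGroup β] [LinearOrder β]
    [IsOrderedAddMonoid β] {f g : α → β} {s : Set α} {x y : α} (hx : x ∈ s) (hy : y ∈ s)
    (hfx : IsMinOn f s x) (hfgy : IsMinOn (f + g) s y) : g y ≤ g x := by
  have hfg : f y + g y ≤ f y + g x :=
    calc f y + g y ≤ f x + g x := hfgy hx
      _ ≤ f y + g x := by gcongr; exact hfx hy
  exact le_of_add_le_add_left hfg

theorem strictMonoOn_add_mul_of_abs_sub_le {W : Set ℝ} {ℓ : ℝ → ℝ} {G c : ℝ} (hGc : G < c)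
    (hLip : ∀ x ∈ W, ∀ y ∈ W, |ℓ x - ℓ y| ≤ G * |x - y|) :
    StrictMonoOn (fun w => ℓ w + c * w) W := by
  intro x hx y hy hxy
  have hdiff : ℓ x - ℓ y ≤ G * (y - x) := by
    have := (abs_le.mp (hLip x hx y hy)).2
    rwa [abs_of_neg (sub_neg.mpr hxy), neg_sub] at this
  nlinarith

theorem stmt_1_general (W : Set ℝ) (L ℓ : ℝ → ℝ) (G : ℝ) (hG : 0 < G)
    (hLip : ∀ x ∈ W, ∀ y ∈ W, |ℓ x - ℓ y| ≤ G * |x - y|)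
    (σ : ℝ) (wt wt1 : ℝ)
    (hwt : wt ∈ W ∧ ∀ w ∈ W, L wt - (σ + 2 * G) * wt ≤ L w - (σ + 2 * G) * w)
    (hwt1 : wt1 ∈ W ∧ ∀ w ∈ W, L wt1 + ℓ wt1 - σ * wt1 ≤ L w + ℓ w - σ * w) :
    wt ≥ wt1 := by
  set F : ℝ → ℝ := fun w => L w - (σ + 2 * G) * w
  set g : ℝ → ℝ := fun w => ℓ w + 2 * G * w
  have hF : IsMinOn F W wt := isMinOn_iff.mpr hwt.2
  have hFg : IsMinOn (F + g) W wt1 := by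
    refine isMinOn_iff.mpr fun w hw => ?_
    simp only [F, g, Pi.add_apply]
    linarith [hwt1.2 w hw]
  have hg_le : g wt1 ≤ g wt := hF.le_of_isMinOn_add hwt.1 hwt1.1 hFg
  exact ((strictMonoOn_add_mul_of_abs_sub_le (by linarith) hLip).le_iff_le hwt1.1 hwt.1).mp hg_le

theorem stmt_1 (W : Set ℝ) (hW : W.Nonempty) (L ℓ : ℝ → ℝ) (G : ℝ) (hG : 0 < G)
    (hLip : ∀ x ∈ W, ∀ y ∈ W, |ℓ x - ℓ y| ≤ G * |x - y|)
    (σ : ℝ) (wt wt1 : ℝ)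
    (hwt : wt ∈ W ∧ ∀ w ∈ W, L wt - (σ + 2 * G) * wt ≤ L w - (σ + 2 * G) * w)
    (hwt1 : wt1 ∈ W ∧ ∀ w ∈ W, L wt1 + ℓ wt1 - σ * wt1 ≤ L w + ℓ w - σ * w) :
    wt ≥ wt1 :=
  stmt_1_general W L ℓ G hG hLip σ wt wt1 hwt hwt1
end

section
/- Let W ⊆ ℝ be nonempty, let L : W → ℝ and ℓ : W → ℝ with ℓ being G-Lipschitz (G > 0). Fix σ ∈ ℝ and set σ' = σ + 2G. If w_{t+1}' minimizes w ↦ L(w) + ℓ(w) − σ' w over W and w_t minimizes w ↦ L(w) − σ w over W, then w_{t+1}' ≥ w_t. -/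
/-!
Adding the optimality inequalities of the two minimizers (an exchange argument) cancels `L` and
leaves `ℓ w' - 2G w' ≤ ℓ w - 2G w`; a `G`-Lipschitz `ℓ` cannot absorb a tilt of slope `2G > G`,
so `w' ≥ w`.
-/

theorem IsMinOn.sub_le_sub_of_isMinOn {α β : Type*} [AddCommGroup β] [PartialOrder β]
    [IsOrderedAddMonoid β] {f g : α → β} {s : Set α} {a b : α}
    (hf : IsMinOn f s a) (hg : IsMinOn g s b) (ha : a ∈ s) (hb : b ∈ s) :
    f a - g a ≤ f b - g b :=
  sub_le_sub (isMinOn_iff.mp hf b hb) (isMinOn_iff.mp hg a ha)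

theorem le_of_abs_sub_le_of_sub_mul_le {ℓ : ℝ → ℝ} {G c x y : ℝ} (hGc : G < c)
    (hLip : |ℓ x - ℓ y| ≤ G * |x - y|) (hxy : ℓ x - c * x ≤ ℓ y - c * y) : y ≤ x := by
  by_contra! hlt
  have hdist : |x - y| = y - x := by rw [abs_sub_comm, abs_of_pos (sub_pos.mpr hlt)]
  have hlower : -(G * (y - x)) ≤ ℓ x - ℓ y := hdist ▸ neg_le_of_abs_le hLip
  nlinarith

theorem stmt_2_general (W : Set ℝ) (L ℓ : ℝ → ℝ) (G : ℝ) (hG : 0 < G)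
    (hLip : ∀ x ∈ W, ∀ y ∈ W, |ℓ x - ℓ y| ≤ G * |x - y|)
    (σ : ℝ) (wt1' wt : ℝ)
    (hwt1' : wt1' ∈ W ∧ ∀ w ∈ W, L wt1' + ℓ wt1' - (σ + 2 * G) * wt1' ≤ L w + ℓ w - (σ + 2 * G) * w)
    (hwt : wt ∈ W ∧ ∀ w ∈ W, L wt - σ * wt ≤ L w - σ * w) :
    wt1' ≥ wt := by
  obtain ⟨hwt1'_mem, hwt1'_min⟩ := hwt1'
  obtain ⟨hwt_mem, hwt_min⟩ := hwt
  have hexchange := IsMinOn.sub_le_sub_of_isMinOn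
    (f := fun w ↦ L w + ℓ w - (σ + 2 * G) * w) (g := fun w ↦ L w - σ * w)
    (isMinOn_iff.mpr hwt1'_min) (isMinOn_iff.mpr hwt_min) hwt1'_mem hwt_mem
  refine le_of_abs_sub_le_of_sub_mul_le (c := 2 * G) (by linarith)
    (hLip wt1' hwt1'_mem wt hwt_mem) ?_
  linarith

theorem stmt_2 (W : Set ℝ) (hW : W.Nonempty) (L ℓ : ℝ → ℝ) (G : ℝ) (hG : 0 < G)
    (hLip : ∀ x ∈ W, ∀ y ∈ W, |ℓ x - ℓ y| ≤ G * |x - y|)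
    (σ : ℝ) (wt1' wt : ℝ)
    (hwt1' : wt1' ∈ W ∧ ∀ w ∈ W, L wt1' + ℓ wt1' - (σ + 2 * G) * wt1' ≤ L w + ℓ w - (σ + 2 * G) * w)
    (hwt : wt ∈ W ∧ ∀ w ∈ W, L wt - σ * wt ≤ L w - σ * w) :
    wt1' ≥ wt :=
  stmt_2_general W L ℓ G hG hLip σ wt1' wt hwt1' hwt
end

section
/- Let W ⊆ ℝ^d be nonempty, let L : W → ℝ and ℓ : W → ℝ with |ℓ(w)| ≤ B for all w ∈ W (B > 0). Fix δ > 0, σ ∈ ℝ^d, a coordinate k, and set σ' = σ + (3B/δ)·e_k where e_k is the k-th standard basis vector. If w_t minimizes w ↦ L(w) − ⟪σ', w⟫ over W and w_{t+1} minimizes w ↦ L(w) + ℓ(w) − ⟪σ, w⟫ over W, then the k-th coordinates satisfy (w_t)_k ≥ (w_{t+1})_k − δ. -/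
open Finset

theorem stmt_3 {d : ℕ} (W : Set (Fin d → ℝ)) (hW : W.Nonempty)
    (L ℓ : (Fin d → ℝ) → ℝ) (B : ℝ) (hB : 0 < B)
    (hbdd : ∀ w ∈ W, |ℓ w| ≤ B)
    (δ : ℝ) (hδ : 0 < δ) (σ : Fin d → ℝ) (k : Fin d)
    (σ' : Fin d → ℝ) (hσ' : σ' = fun i => σ i + (3 * B / δ) * (if i = k then (1:ℝ) else 0))
    (wt wt1 : Fin d → ℝ)
    (hwt : wt ∈ W ∧ ∀ w ∈ W, L wt - ∑ i, σ' i * wt i ≤ L w - ∑ i, σ' i * w i)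
    (hwt1 : wt1 ∈ W ∧ ∀ w ∈ W, L wt1 + ℓ wt1 - ∑ i, σ i * wt1 i ≤ L w + ℓ w - ∑ i, σ i * w i) :
    wt k ≥ wt1 k - δ := by
  obtain ⟨hmem, hmin⟩ := hwt
  obtain ⟨hmem1, hmin1⟩ := hwt1
  have hsum : ∀ x : Fin d → ℝ, ∑ i, σ' i * x i = (∑ i, σ i * x i) + (3 * B / δ) * x k := by
    intro x
    subst hσ'
    simp only [add_mul, Finset.sum_add_distrib]
    congr 1
    rw [Finset.sum_eq_single k]
    · simp
    · intro b _ hb; simp [hb]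
    · simp
  have h1 := hmin wt1 hmem1
  have h2 := hmin1 wt hmem
  rw [hsum wt, hsum wt1] at h1
  have hb1 := abs_le.mp (hbdd wt hmem)
  have hb2 := abs_le.mp (hbdd wt1 hmem1)
  have key : (3 * B / δ) * (wt1 k - wt k) ≤ 2 * B := by nlinarith
  have hc : 0 < 3 * B / δ := by positivity
  by_contra hcon
  push_neg at hcon
  have hd : δ < wt1 k - wt k := by linarith
  have hm := mul_lt_mul_of_pos_left hd hc
  have h3 : 3 * B / δ * δ = 3 * B := by field_simp
  linarith
end

section
/- Let W be a nonempty set, ℓ_1, …, ℓ_T : W → ℝ loss functions, R : W → ℝ a regularizer, and suppose for each t ∈ {1, …, T+1} the point w_t ∈ W minimizes w ↦ Σ_{i<t} ℓ_i(w) + R(w) over W. Let w* ∈ W minimize Σ_{t=1}^T ℓ_t(w) over W. Then Σ_{t=1}^T ℓ_t(w_t) − Σ_{t=1}^T ℓ_t(w*) ≤ R(w*) − R(w_1) + Σ_{t=1}^T (ℓ_t(w_t) − ℓ_t(w_{t+1})). -/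
open Finset

theorem stmt_6 {α : Type*} (W : Set α) (hW : W.Nonempty) (T : ℕ)
    (ℓ : ℕ → α → ℝ) (R : α → ℝ) (w : ℕ → α) (wstar : α)
    (hw : ∀ t ≤ T, w t ∈ W ∧
      ∀ u ∈ W, (∑ i ∈ range t, ℓ i (w t)) + R (w t) ≤ (∑ i ∈ range t, ℓ i u) + R u)
    (hstar : wstar ∈ W ∧ ∀ u ∈ W, ∑ t ∈ range T, ℓ t wstar ≤ ∑ t ∈ range T, ℓ t u) :
    (∑ t ∈ range T, ℓ t (w t)) - (∑ t ∈ range T, ℓ t wstar)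
      ≤ R wstar - R (w 0) + ∑ t ∈ range T, (ℓ t (w t) - ℓ t (w (t + 1))) := by
  have key : ∀ n ≤ T, (∑ t ∈ range n, ℓ t (w (t + 1))) + R (w 0)
      ≤ (∑ t ∈ range n, ℓ t (w n)) + R (w n) := by
    intro n hn
    induction n with
    | zero => simp
    | succ m ih =>
      have hm : m ≤ T := Nat.le_of_succ_le hn
      have hmem : w (m + 1) ∈ W := (hw (m + 1) hn).1
      have h1 := ih hm
      have h2 := (hw m hm).2 (w (m + 1)) hmem
      rw [sum_range_succ, sum_range_succ]
      linarith
  have hT := key T le_rfl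
  have h2 := (hw T le_rfl).2 wstar hstar.1
  have hsplit : (∑ t ∈ range T, ℓ t (w t))
      = (∑ t ∈ range T, (ℓ t (w t) - ℓ t (w (t + 1)))) + ∑ t ∈ range T, ℓ t (w (t + 1)) := by
    rw [← sum_add_distrib]; simp
  linarith
end

section
/- Let W be a nonempty set, ℓ_1, …, ℓ_{T+1} : W → ℝ, and suppose for each t ∈ {1, …, T+1}, w_t ∈ W minimizes w ↦ Σ_{i<t} ℓ_i(w) over W (so w_1 minimizes the zero function, i.e., is arbitrary, and w_{t+1} minimizes Σ_{i≤t} ℓ_i). Then Σ_{t=1}^T ℓ_t(w_{t+1}) ≤ Σ_{t=1}^T ℓ_t(w*) for any w* ∈ W, i.e., the 'Be-the-Leader' strategy has nonpositive regret. -/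
open Finset

theorem stmt_7 {α : Type*} (W : Set α) (hW : W.Nonempty) (T : ℕ)
    (ℓ : ℕ → α → ℝ) (w : ℕ → α)
    (hw : ∀ t ≤ T, w t ∈ W ∧
      ∀ u ∈ W, (∑ i ∈ range t, ℓ i (w t)) ≤ ∑ i ∈ range t, ℓ i u) :
    ∀ wstar ∈ W, ∑ t ∈ range T, ℓ t (w (t + 1)) ≤ ∑ t ∈ range T, ℓ t wstar := by
  induction T with
  | zero => simp
  | succ T ih =>
    intro wstar hws
    have hw' : ∀ t ≤ T, w t ∈ W ∧
        ∀ u ∈ W, (∑ i ∈ range t, ℓ i (w t)) ≤ ∑ i ∈ range t, ℓ i u :=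
      fun t ht => hw t (ht.trans (Nat.le_succ T))
    obtain ⟨hmem, hmin⟩ := hw (T + 1) le_rfl
    have h1 := ih hw' (w (T + 1)) hmem
    have h2 := hmin wstar hws
    rw [sum_range_succ, sum_range_succ] at h2 ⊢
    linarith
end

section
/- Let W ⊆ ℝ be a nonempty compact interval of length at most D. Suppose a, b : [0, ∞) → W are measurable functions such that b(σ + c) ≥ a(σ) for all σ ≥ 0, where c > 0 is a fixed constant. If X ~ Exp(η) with η > 0, then E[b(X)] ≥ E[a(X)] − D(1 − exp(−ηc)), and in particular E[b(X)] ≥ E[a(X)] − ηcD. -/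
/-! Memorylessness: restricted to `(c, ∞)`, the law `Exp(η)` is `e^{-ηc}` times its own
translate by `c`. Hence `E[b(X)] = E[b(X); X ≤ c] + e^{-ηc} E[b(X + c)]`, where the first term
is at least `lo (1 - e^{-ηc})` and `E[b(X + c)]` lies between `E[a(X)]` and `hi`. This gives
`E[a(X)] - E[b(X)] ≤ (1 - e^{-ηc}) (hi - lo)`, and `1 - e^{-ηc} ≤ ηc`. -/

open MeasureTheory Real Set

namespace ProbabilityTheory

lemma expMeasure_Iio_zero (η : ℝ) : expMeasure η (Iio 0) = 0 := by
  change volume.withDensity (exponentialPDF η) (Iio 0) = 0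
  rw [withDensity_apply _ measurableSet_Iio, lintegral_exponentialPDF_of_nonpos le_rfl]

lemma ae_nonneg_expMeasure (η : ℝ) : ∀ᵐ x ∂expMeasure η, 0 ≤ x :=
  measure_eq_zero_iff_ae_notMem.1 (expMeasure_Iio_zero η) |>.mono fun _ hx => not_lt.1 hx

lemma measureReal_Iic_expMeasure {η c : ℝ} (hη : 0 < η) (hc : 0 ≤ c) :
    (expMeasure η).real (Iic c) = 1 - exp (-(η * c)) := by
  have := isProbabilityMeasure_expMeasure hη
  rw [← cdf_eq_real, cdf_expMeasure_eq hη, if_pos hc]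

lemma expMeasure_restrict_Ioi {η c : ℝ} (hη : 0 < η) (hc : 0 ≤ c) :
    (expMeasure η).restrict (Ioi c) =
      ENNReal.ofReal (exp (-(η * c))) • (expMeasure η).map (· + c) := by
  have := isProbabilityMeasure_expMeasure hη
  refine Measure.ext_of_Iic _ _ fun t => ?_
  rw [Measure.smul_apply, Measure.map_apply (measurable_add_const c) measurableSet_Iic,
    Measure.restrict_apply measurableSet_Iic, Iic_inter_Ioi, preimage_add_const_Iic, smul_eq_mul]
  rcases lt_or_ge t c with htc | hct
  · rw [Ioc_eq_empty_of_le htc.le, measure_empty,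
      measure_mono_null (Iic_subset_Iio.2 (sub_neg.2 htc)) (expMeasure_Iio_zero η), mul_zero]
  · rw [← measure_cdf (expMeasure η), StieltjesFunction.measure_Ioc, measure_cdf, ← ofReal_cdf,
      ← ENNReal.ofReal_mul (exp_pos _).le]
    simp only [cdf_expMeasure_eq hη, if_pos hc, if_pos (hc.trans hct), if_pos (sub_nonneg.2 hct),
      mul_sub, mul_one, ← exp_add]
    ring_nf

lemma setIntegral_Ioi_expMeasure {η c : ℝ} (hη : 0 < η) (hc : 0 ≤ c) (g : ℝ → ℝ) :
    ∫ x in Ioi c, g x ∂expMeasure η = exp (-(η * c)) * ∫ x, g (x + c) ∂expMeasure η := by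
  rw [expMeasure_restrict_Ioi hη hc, integral_smul_measure, ENNReal.toReal_ofReal (exp_pos _).le,
    smul_eq_mul]
  congr 1
  exact integral_map_equiv (MeasurableEquiv.addRight c) g

theorem integral_expMeasure_sub_le_of_le_shift {η c lo hi : ℝ} (hη : 0 < η) (hc : 0 ≤ c)
    {a b : ℝ → ℝ} (ha : Measurable a) (hb : Measurable b)
    (haW : ∀ σ ≥ 0, a σ ∈ Icc lo hi) (hbW : ∀ σ ≥ 0, b σ ∈ Icc lo hi)
    (hab : ∀ σ ≥ 0, a σ ≤ b (σ + c)) :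
    ∫ x, a x ∂expMeasure η - ∫ x, b x ∂expMeasure η ≤ (hi - lo) * (1 - exp (-(η * c))) := by
  have := isProbabilityMeasure_expMeasure hη
  have h0 := ae_nonneg_expMeasure η
  have hbcW : ∀ᵐ x ∂expMeasure η, b (x + c) ∈ Icc lo hi :=
    h0.mono fun x hx => hbW _ (add_nonneg hx hc)
  have ha_int : Integrable a (expMeasure η) := .of_mem_Icc lo hi ha.aemeasurable (h0.mono haW)
  have hb_int : Integrable b (expMeasure η) := .of_mem_Icc lo hi hb.aemeasurable (h0.mono hbW)
  have hbc_int : Integrable (fun x => b (x + c)) (expMeasure η) :=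
    .of_mem_Icc lo hi (hb.comp (measurable_add_const c)).aemeasurable hbcW
  have hsplit : ∫ x, b x ∂expMeasure η =
      ∫ x in Iic c, b x ∂expMeasure η + exp (-(η * c)) * ∫ x, b (x + c) ∂expMeasure η := by
    rw [← setIntegral_Ioi_expMeasure hη hc, ← compl_Iic,
      integral_add_compl measurableSet_Iic hb_int]
  have hhead : lo * (1 - exp (-(η * c))) ≤ ∫ x in Iic c, b x ∂expMeasure η := by
    rw [← measureReal_Iic_expMeasure hη hc, mul_comm, ← smul_eq_mul, ← setIntegral_const]
    exact integral_mono_ae (integrable_const _) hb_int.integrableOn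
      (ae_restrict_of_ae (h0.mono fun x hx => (hbW x hx).1))
  have hshift : ∫ x, a x ∂expMeasure η ≤ ∫ x, b (x + c) ∂expMeasure η :=
    integral_mono_ae ha_int hbc_int (h0.mono hab)
  have htail : ∫ x, b (x + c) ∂expMeasure η ≤ hi := by
    simpa using integral_mono_ae hbc_int (integrable_const hi) (hbcW.mono fun _ h => h.2)
  have hE : 0 ≤ 1 - exp (-(η * c)) :=
    sub_nonneg.2 (exp_le_one_iff.2 (neg_nonpos.2 (mul_nonneg hη.le hc)))
  linarith [mul_le_mul_of_nonneg_left htail hE]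

end ProbabilityTheory

open MeasureTheory ProbabilityTheory Real

theorem stmt_8_general (lo hi D : ℝ) (hD : hi - lo ≤ D)
    (a b : ℝ → ℝ) (ha : Measurable a) (hb : Measurable b)
    (haW : ∀ σ ≥ (0:ℝ), a σ ∈ Set.Icc lo hi) (hbW : ∀ σ ≥ (0:ℝ), b σ ∈ Set.Icc lo hi)
    (c : ℝ) (hc : 0 < c) (hmono : ∀ σ ≥ (0:ℝ), b (σ + c) ≥ a σ)
    (η : ℝ) (hη : 0 < η) :
    (∫ x, b x ∂(expMeasure η)) ≥ (∫ x, a x ∂(expMeasure η)) - D * (1 - exp (-η * c)) ∧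
    (∫ x, b x ∂(expMeasure η)) ≥ (∫ x, a x ∂(expMeasure η)) - η * c * D := by
  have hgap := integral_expMeasure_sub_le_of_le_shift hη hc.le ha hb haW hbW hmono
  have hD0 : 0 ≤ D := by linarith [(haW 0 le_rfl).1.trans (haW 0 le_rfl).2]
  have hE : 0 ≤ 1 - exp (-(η * c)) :=
    sub_nonneg.2 (exp_le_one_iff.2 (neg_nonpos.2 (mul_nonneg hη.le hc.le)))
  have hEc : 1 - exp (-(η * c)) ≤ η * c := by linarith [add_one_le_exp (-(η * c))]
  have hfirst := hgap.trans (mul_le_mul_of_nonneg_right hD hE)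
  rw [neg_mul]
  exact ⟨by linarith, by linarith [mul_le_mul_of_nonneg_left hEc hD0]⟩

theorem stmt_8 (lo hi D : ℝ) (hle : lo ≤ hi) (hD : hi - lo ≤ D)
    (a b : ℝ → ℝ) (ha : Measurable a) (hb : Measurable b)
    (haW : ∀ σ ≥ (0:ℝ), a σ ∈ Set.Icc lo hi) (hbW : ∀ σ ≥ (0:ℝ), b σ ∈ Set.Icc lo hi)
    (c : ℝ) (hc : 0 < c) (hmono : ∀ σ ≥ (0:ℝ), b (σ + c) ≥ a σ)
    (η : ℝ) (hη : 0 < η) :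
    (∫ x, b x ∂(expMeasure η)) ≥ (∫ x, a x ∂(expMeasure η)) - D * (1 - exp (-η * c)) ∧
    (∫ x, b x ∂(expMeasure η)) ≥ (∫ x, a x ∂(expMeasure η)) - η * c * D :=
  stmt_8_general lo hi D hD a b ha hb haW hbW c hc hmono η hη
end
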